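/- Let P be the polynomial ring in variables β^u_k, γ^{u'}_k for u ∈ {x,y,h}, k ≥ 0, and let ν be a nonzero polynomial in the algebraically independent quadratics τ^u_k (u ∈ {x,y,h}, k ≥ 0, defined as in the paper) that is not divisible by τ^h_0 as a polynomial in the τ's. Then ν does not lie in the principal ideal of P generated by τ^h_0 = -2β^x_0 γ^{x'}_0 + 2β^y_0 γ^{y'}_0. -/
import Mathlib


open MvPolynomial

/-- Generators: `((u, true), k)` is `β^u_k`, `((u, false), k)` is `γ^{u'}_k`, `u : Fin 3` encodes
`x, y, h` as `0, 1, 2`, and `k` is the level. -/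
abbrev PGen : Type := (Fin 3 × Bool) × ℕ

abbrev Pring : Type := MvPolynomial PGen ℂ

noncomputable def Beta (u : Fin 3) (k : ℕ) : Pring := X ((u, true), k)
noncomputable def Gam (u : Fin 3) (k : ℕ) : Pring := X ((u, false), k)

/-- `c^n_k = k (k-1) ⋯ (k-n+1)`, which vanishes for `n > k` and equals `1` for `n = 0`. -/
noncomputable def cnk (n k : ℕ) : ℂ := (k.descFactorial n : ℂ)

/-- `v^h(n)`: `β^u_k ↦ -c^n_k β^u_{k-n}`, `γ^{u'}_k ↦ c^n_k γ^{u'}_{k-n}`. -/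
noncomputable def vH (n : ℕ) : Derivation ℂ Pring Pring :=
  mkDerivation ℂ (fun g => match g with
    | ((u, true), k) => -(cnk n k) • Beta u (k - n)
    | ((u, false), k) => (cnk n k) • Gam u (k - n))

/-- `v^x(n)`: `β^u_k ↦ -(1/2) c^n_k γ^{u'}_{k-n}`, `γ^{u'}_k ↦ 0`. -/
noncomputable def vX (n : ℕ) : Derivation ℂ Pring Pring :=
  mkDerivation ℂ (fun g => match g with
    | ((u, true), k) => (-(2⁻¹ : ℂ) * cnk n k) • Gam u (k - n)
    | ((_, false), _) => 0)

/-- `v^y(n)`: `β^u_k ↦ 0`, `γ^{u'}_k ↦ -(1/2) c^n_k β^u_{k-n}`. -/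
noncomputable def vY (n : ℕ) : Derivation ℂ Pring Pring :=
  mkDerivation ℂ (fun g => match g with
    | ((_, true), _) => 0
    | ((u, false), k) => (-(2⁻¹ : ℂ) * cnk n k) • Beta u (k - n))


noncomputable def Del : Derivation ℂ Pring Pring :=
  mkDerivation ℂ (fun g => ((g.2 + 1 : ℕ) : ℂ) • (X (g.1, g.2 + 1) : Pring))

/-- `τ^x_0 = 2 β^x_0 γ^{h'}_0 - β^h_0 γ^{y'}_0`, `τ^y_0 = -2 β^y_0 γ^{h'}_0 + β^h_0 γ^{x'}_0`,
`τ^h_0 = -2 β^x_0 γ^{x'}_0 + 2 β^y_0 γ^{y'}_0`. -/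
noncomputable def tau0 : Fin 3 → Pring :=
  ![2 * Beta 0 0 * Gam 2 0 - Beta 2 0 * Gam 1 0,
    -2 * Beta 1 0 * Gam 2 0 + Beta 2 0 * Gam 0 0,
    -2 * Beta 0 0 * Gam 0 0 + 2 * Beta 1 0 * Gam 1 0]

/-- `τ^u_k = ∂^k τ^u_0`. -/
noncomputable def tau (u : Fin 3) (k : ℕ) : Pring := (fun p => Del p)^[k] (tau0 u)

/-- The subalgebra `P_τ` generated by the `τ^u_k`. -/
noncomputable def Ptau : Subalgebra ℂ Pring :=
  Algebra.adjoin ℂ (Set.range fun p : Fin 3 × ℕ => tau p.1 p.2)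

/-- `P^{A_+}`: the polynomials annihilated by all `v^u(n)`, `u ∈ {x,y,h}`, `n ≥ 0`. -/
def AplusInv (ω : Pring) : Prop := ∀ n : ℕ, vH n ω = 0 ∧ vX n ω = 0 ∧ vY n ω = 0


/-! ### Auxiliary machinery for `stmt7` -/

section Stmt7Aux

/-- The polynomial ring in the `τ`-variables. -/
abbrev Aring : Type := MvPolynomial (Fin 3 × ℕ) ℂ

noncomputable def tvar : Aring := X ((0 : Fin 3), 0)

/-- Localization of `Aring` away from the variable `T^x_0`. -/
abbrev Lring : Type := Localization.Away tvar

noncomputable def aL (k : ℕ) : Lring := algebraMap Aring Lring (X ((0 : Fin 3), k))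
noncomputable def hL (k : ℕ) : Lring := algebraMap Aring Lring (X ((2 : Fin 3), k))
noncomputable def yL (k : ℕ) : Lring := algebraMap Aring Lring (X ((1 : Fin 3), k))

/-- Constants of `ℂ` inside `Lring`. -/
noncomputable def cL (z : ℂ) : Lring := algebraMap Aring Lring (C z)

lemma cL_mul (z w : ℂ) : cL z * cL w = cL (z * w) := by
  rw [cL, cL, cL, ← map_mul, ← map_mul]

open Finset in
/-- Recursively defined images of `β^y_k`. -/
noncomputable def bb : ℕ → Lring
  | 0 => 0
  | (k+1) => (cL (-(2⁻¹:ℂ)) * hL (k+1) - ∑ i ∈ (range (k+1)).attach, bb i.1 * aL (k+1-i.1))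
      * IsLocalization.Away.invSelf (S := Lring) tvar
  decreasing_by exact mem_range.mp i.2

lemma aL_zero : aL 0 = algebraMap Aring Lring tvar := rfl

open Finset in
lemma bb_spec (k : ℕ) : ∑ i ∈ range (k+1), bb i * aL (k-i)
    = if k = 0 then 0 else cL (-(2⁻¹:ℂ)) * hL k := by
  cases k with
  | zero => simp [bb]
  | succ k =>
    rw [Finset.sum_range_succ]
    have h1 : ∑ i ∈ range (k+1), bb i * aL (k+1-i)
        = ∑ i ∈ (range (k+1)).attach, bb i.1 * aL (k+1-i.1) := (Finset.sum_attach _ _).symm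
    have h2 : bb (k+1) * aL (k+1-(k+1))
        = cL (-(2⁻¹:ℂ)) * hL (k+1) - ∑ i ∈ (range (k+1)).attach, bb i.1 * aL (k+1-i.1) := by
      rw [Nat.sub_self, aL_zero, bb]
      rw [mul_assoc, mul_comm (IsLocalization.Away.invSelf (S := Lring) tvar),
        IsLocalization.Away.mul_invSelf, mul_one]
    rw [h1, h2]
    simp

lemma Del_X (g : PGen) : Del (X g) = ((g.2 + 1 : ℕ) : ℂ) • (X (g.1, g.2 + 1) : Pring) :=
  mkDerivation_X _ _ _

lemma Del_Beta (u : Fin 3) (k : ℕ) : Del (Beta u k) = ((k+1 : ℕ) : ℂ) • Beta u (k+1) :=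
  Del_X _

lemma Del_Gam (u : Fin 3) (k : ℕ) : Del (Gam u k) = ((k+1 : ℕ) : ℂ) • Gam u (k+1) :=
  Del_X _

open Finset in
noncomputable def Ssum (u v : Fin 3) (k : ℕ) : Pring :=
  ∑ i ∈ range (k+1), Beta u i * Gam v (k-i)

open Finset in
lemma Del_Ssum (u v : Fin 3) (k : ℕ) :
    Del (Ssum u v k) = ((k+1 : ℕ) : ℂ) • Ssum u v (k+1) := by
  unfold Ssum
  rw [map_sum, Finset.smul_sum]
  have key : ∀ i ∈ range (k+1), Del (Beta u i * Gam v (k-i))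
      = ((i+1 : ℕ) : ℂ) • (Beta u (i+1) * Gam v (k+1-(i+1)))
        + ((k+1-i : ℕ) : ℂ) • (Beta u i * Gam v (k+1-i)) := by
    intro i hi
    have hik : i ≤ k := Nat.lt_succ_iff.mp (mem_range.mp hi)
    have e1 : k + 1 - (i+1) = k - i := by omega
    have e2 : k - i + 1 = k + 1 - i := by omega
    rw [Derivation.leibniz, Del_Beta, Del_Gam, e1, e2]
    simp only [smul_eq_mul, MvPolynomial.smul_eq_C_mul]
    ring
  rw [Finset.sum_congr rfl key, Finset.sum_add_distrib]
  have hA : ∑ i ∈ range (k+1), ((i+1 : ℕ) : ℂ) • (Beta u (i+1) * Gam v (k+1-(i+1)))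
      = ∑ j ∈ range (k+2), ((j : ℕ) : ℂ) • (Beta u j * Gam v (k+1-j)) := by
    rw [Finset.sum_range_succ' (fun j => ((j : ℕ) : ℂ) • (Beta u j * Gam v (k+1-j))) (k+1)]
    simp
  have hB : ∑ i ∈ range (k+1), ((k+1-i : ℕ) : ℂ) • (Beta u i * Gam v (k+1-i))
      = ∑ j ∈ range (k+2), ((k+1-j : ℕ) : ℂ) • (Beta u j * Gam v (k+1-j)) := by
    rw [Finset.sum_range_succ (fun j => ((k+1-j : ℕ) : ℂ) • (Beta u j * Gam v (k+1-j))) (k+1)]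
    simp
  rw [hA, hB, ← Finset.sum_add_distrib]
  refine Finset.sum_congr rfl fun j hj => ?_
  have hjk : j ≤ k + 1 := Nat.lt_succ_iff.mp (mem_range.mp hj)
  rw [← add_smul]
  congr 1
  have h3 : (j : ℂ) + ((k+1-j : ℕ) : ℂ) = ((j + (k+1-j) : ℕ) : ℂ) := by push_cast; ring
  rw [h3]
  congr 1
  omega

/-- Binomial-expanded form of `τ^u_k`, up to the factor `k!`. -/
noncomputable def TT (u : Fin 3) (k : ℕ) : Pring :=
  ![(2:ℂ) • Ssum 0 2 k - Ssum 2 1 k,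
    (-2:ℂ) • Ssum 1 2 k + Ssum 2 0 k,
    (-2:ℂ) • Ssum 0 0 k + (2:ℂ) • Ssum 1 1 k] u

lemma C_two : (C (2:ℂ) : Pring) = 2 := map_ofNat _ 2
lemma C_neg_two : (C (-2:ℂ) : Pring) = -2 := by rw [map_neg, C_two]

lemma tau0_eq (u : Fin 3) : tau0 u = TT u 0 := by
  fin_cases u <;>
    simp [tau0, TT, Ssum, Finset.sum_range_one, MvPolynomial.smul_eq_C_mul, C_two,
      C_neg_two] <;>
    ring

lemma Del_TT (u : Fin 3) (k : ℕ) : Del (TT u k) = ((k+1 : ℕ) : ℂ) • TT u (k+1) := by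
  fin_cases u <;>
    simp [TT, Del_Ssum, smul_sub, smul_add, smul_smul, mul_comm]

lemma tau_eq (u : Fin 3) (k : ℕ) : tau u k = ((k.factorial : ℕ) : ℂ) • TT u k := by
  induction k with
  | zero => simp [tau, tau0_eq]
  | succ k ih =>
    have h : tau u (k+1) = Del (tau u k) := Function.iterate_succ_apply' _ _ _
    rw [h, ih, Derivation.map_smul, Del_TT, smul_smul]
    congr 1
    push_cast [Nat.factorial_succ]
    ring

/-- The variable assignment defining the homomorphism `Θ : Pring → Lring`. -/
noncomputable def thv : PGen → Lring := fun g =>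
  match g with
  | ((u, true), k) => ![0, bb k, if k = 0 then 1 else 0] u
  | ((u, false), k) => ![yL k, -(aL k), 0] u

noncomputable def Th : Pring →ₐ[ℂ] Lring := aeval thv

lemma Th_Beta (u : Fin 3) (k : ℕ) : Th (Beta u k) = thv ((u, true), k) := by
  unfold Th Beta; exact aeval_X _ _

lemma Th_Gam (u : Fin 3) (k : ℕ) : Th (Gam u k) = thv ((u, false), k) := by
  unfold Th Gam; exact aeval_X _ _

lemma Th_C (a : ℂ) : Th (C a) = cL a := by
  have h1 : Th (C a) = algebraMap ℂ Lring a := Th.commutes a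
  rw [h1, IsScalarTower.algebraMap_apply ℂ Aring Lring, cL, algebraMap_eq]

open Finset in
lemma Th_S02 (k : ℕ) : Th (Ssum 0 2 k) = 0 := by
  simp [Ssum, map_sum, Th_Beta, thv]

open Finset in
lemma Th_S00 (k : ℕ) : Th (Ssum 0 0 k) = 0 := by
  simp [Ssum, map_sum, Th_Beta, thv]

open Finset in
lemma Th_S12 (k : ℕ) : Th (Ssum 1 2 k) = 0 := by
  simp [Ssum, map_sum, Th_Beta, Th_Gam, thv]

open Finset in
lemma Th_S21 (k : ℕ) : Th (Ssum 2 1 k) = -(aL k) := by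
  have key : ∀ i ∈ range (k+1), Th (Beta 2 i * Gam 1 (k-i))
      = if i = 0 then -(aL (k-i)) else 0 := by
    intro i _
    rw [map_mul, Th_Beta, Th_Gam]
    by_cases hi0 : i = 0 <;> simp [thv, hi0]
  rw [Ssum, map_sum, Finset.sum_congr rfl key, Finset.sum_ite_eq' (range (k+1)) 0]
  simp

open Finset in
lemma Th_S20 (k : ℕ) : Th (Ssum 2 0 k) = yL k := by
  have key : ∀ i ∈ range (k+1), Th (Beta 2 i * Gam 0 (k-i))
      = if i = 0 then yL (k-i) else 0 := by
    intro i _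
    rw [map_mul, Th_Beta, Th_Gam]
    by_cases hi0 : i = 0 <;> simp [thv, hi0]
  rw [Ssum, map_sum, Finset.sum_congr rfl key, Finset.sum_ite_eq' (range (k+1)) 0]
  simp

open Finset in
lemma Th_S11 (k : ℕ) : Th (Ssum 1 1 k) = -(if k = 0 then 0 else cL (-(2⁻¹:ℂ)) * hL k) := by
  have key : ∀ i ∈ range (k+1), Th (Beta 1 i * Gam 1 (k-i)) = -(bb i * aL (k-i)) := by
    intro i _
    rw [map_mul, Th_Beta, Th_Gam]
    have e1 : thv ((1, true), i) = bb i := by simp [thv]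
    have e2 : thv ((1, false), k - i) = -(aL (k - i)) := by simp [thv]
    rw [e1, e2]
    ring
  rw [Ssum, map_sum, Finset.sum_congr rfl key, Finset.sum_neg_distrib, bb_spec]

/-- The target assignment in `Aring`. -/
noncomputable def wA : Fin 3 × ℕ → Aring :=
  fun p => if p = ((2 : Fin 3), 0) then 0 else ((p.2.factorial : ℕ) : ℂ) • X p

noncomputable def algL : Aring →ₐ[ℂ] Lring := IsScalarTower.toAlgHom ℂ Aring Lring

lemma algL_apply (x : Aring) : algL x = algebraMap Aring Lring x := rfl

set_option maxHeartbeats 2000000 in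
lemma Th_tau (u : Fin 3) (k : ℕ) : Th (tau u k) = algL (wA (u, k)) := by
  rw [tau_eq, MvPolynomial.smul_eq_C_mul, map_mul, Th_C]
  fin_cases u
  · show cL ((k.factorial : ℕ) : ℂ) * Th (TT 0 k) = algL (wA (0, k))
    have hTT : TT 0 k = (2:ℂ) • Ssum 0 2 k - Ssum 2 1 k := rfl
    rw [hTT, MvPolynomial.smul_eq_C_mul, map_sub, map_mul, Th_C, Th_S02, Th_S21]
    have hne : ((0 : Fin 3), k) ≠ ((2 : Fin 3), 0) := by simp
    rw [wA]
    simp only [if_neg hne]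
    rw [MvPolynomial.smul_eq_C_mul, algL_apply, map_mul]
    show cL _ * (cL 2 * 0 - -(aL k)) = cL _ * aL k
    ring
  · show cL ((k.factorial : ℕ) : ℂ) * Th (TT 1 k) = algL (wA (1, k))
    have hTT : TT 1 k = (-2:ℂ) • Ssum 1 2 k + Ssum 2 0 k := rfl
    rw [hTT, MvPolynomial.smul_eq_C_mul, map_add, map_mul, Th_C, Th_S12, Th_S20]
    have hne : ((1 : Fin 3), k) ≠ ((2 : Fin 3), 0) := by simp
    rw [wA]
    simp only [if_neg hne]
    rw [MvPolynomial.smul_eq_C_mul, algL_apply, map_mul]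
    show cL _ * (cL (-2) * 0 + yL k) = cL _ * yL k
    ring
  · show cL ((k.factorial : ℕ) : ℂ) * Th (TT 2 k) = algL (wA (2, k))
    have hTT : TT 2 k = (-2:ℂ) • Ssum 0 0 k + (2:ℂ) • Ssum 1 1 k := rfl
    rw [hTT, MvPolynomial.smul_eq_C_mul, MvPolynomial.smul_eq_C_mul, map_add, map_mul,
      map_mul, Th_C, Th_C, Th_S00, Th_S11]
    by_cases hk : k = 0
    · subst hk
      rw [if_pos rfl]
      have hw : wA ((2 : Fin 3), 0) = 0 := by simp [wA]
      rw [hw, map_zero]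
      show cL _ * (cL (-2) * 0 + cL 2 * -0) = 0
      ring
    · rw [if_neg hk]
      have hne : ((2 : Fin 3), k) ≠ ((2 : Fin 3), 0) := by simp [hk]
      rw [wA]
      simp only [if_neg hne]
      rw [MvPolynomial.smul_eq_C_mul, algL_apply, map_mul]
      have h12 : cL (2:ℂ) * cL (-(2⁻¹:ℂ)) = cL (-1) := by
        rw [cL_mul]
        norm_num
      show cL _ * (cL (-2) * 0 + cL 2 * -(cL (-(2⁻¹:ℂ)) * hL k)) = cL _ * hL k
      have hneg : cL (-1 : ℂ) = -1 := by
        rw [cL, map_neg, MvPolynomial.C_1, map_neg, map_one]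
      linear_combination (-(cL ((k.factorial : ℕ) : ℂ)) * hL k) * h12 +
        (-(cL ((k.factorial : ℕ) : ℂ)) * hL k) * hneg

lemma Th_tau202 : Th (tau 2 0) = 0 := by
  rw [Th_tau]
  simp [wA]

/-- Scaling of variables. -/
noncomputable def scF : Aring →ₐ[ℂ] Aring :=
  aeval (fun p : Fin 3 × ℕ => ((p.2.factorial : ℕ) : ℂ) • X p)
noncomputable def scInv : Aring →ₐ[ℂ] Aring :=
  aeval (fun p : Fin 3 × ℕ => (((p.2.factorial : ℕ) : ℂ))⁻¹ • X p)

lemma scInv_scF (x : Aring) : scInv (scF x) = x := by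
  have h : scInv.comp scF = AlgHom.id ℂ Aring := by
    apply MvPolynomial.algHom_ext
    intro p
    simp only [AlgHom.comp_apply, AlgHom.id_apply, scF, scInv, aeval_X, map_smul]
    rw [smul_smul, mul_inv_cancel₀ (by exact_mod_cast p.2.factorial_ne_zero), one_smul]
  calc scInv (scF x) = (scInv.comp scF) x := rfl
    _ = x := by rw [h]; rfl

/-- Killing the variable `T^h_0`. -/
noncomputable def sigF : Aring →ₐ[ℂ] Aring :=
  aeval (fun p : Fin 3 × ℕ => if p = ((2 : Fin 3), 0) then 0 else X p)

lemma sigF_X0 : sigF (X ((2 : Fin 3), 0) : Aring) = 0 := by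
  simp [sigF]

lemma sigF_ne_zero {P : Aring} (h : ¬ (X ((2 : Fin 3), 0) : Aring) ∣ P) : sigF P ≠ 0 := by
  intro h0
  apply h
  rw [← Ideal.mem_span_singleton]
  set I : Ideal Aring := Ideal.span {(X ((2 : Fin 3), 0) : Aring)} with hI
  have hcomp : (Ideal.Quotient.mk I).comp (sigF : Aring →+* Aring) = Ideal.Quotient.mk I := by
    apply MvPolynomial.ringHom_ext
    · intro a
      show Ideal.Quotient.mk I (sigF (C a)) = Ideal.Quotient.mk I (C a)
      rw [show sigF (C a : Aring) = C a by simp [sigF]]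
    · intro p
      show Ideal.Quotient.mk I (sigF (X p)) = Ideal.Quotient.mk I (X p)
      by_cases hp : p = ((2 : Fin 3), 0)
      · subst hp
        rw [sigF_X0, map_zero]
        symm
        rw [Ideal.Quotient.eq_zero_iff_mem]
        exact Ideal.subset_span rfl
      · have : sigF (X p : Aring) = X p := by simp [sigF, hp]
        rw [this]
  have hP0 : Ideal.Quotient.mk I P = 0 := by
    have hc := congrArg (fun f => f P) hcomp
    simp only [RingHom.comp_apply] at hc
    rw [← hc]
    show Ideal.Quotient.mk I (sigF P) = 0
    rw [h0, map_zero]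
  exact (Ideal.Quotient.eq_zero_iff_mem).mp hP0

lemma aeval_wA_eq (QQ : Aring) : aeval wA QQ = sigF (scF QQ) := by
  have h : (aeval wA : Aring →ₐ[ℂ] Aring) = sigF.comp scF := by
    apply MvPolynomial.algHom_ext
    intro p
    simp only [aeval_X, AlgHom.comp_apply, scF, map_smul]
    by_cases hp : p = ((2 : Fin 3), 0)
    · subst hp
      rw [sigF_X0, smul_zero]
      simp [wA]
    · have hs : sigF (X p : Aring) = X p := by simp [sigF, hp]
      rw [hs]
      simp [wA, hp]
  rw [h]; rfl

lemma aeval_wA_ne_zero {QQ : Aring} (hQ : ¬ (X ((2 : Fin 3), 0) : Aring) ∣ QQ) :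
    aeval wA QQ ≠ 0 := by
  rw [aeval_wA_eq]
  apply sigF_ne_zero
  rintro ⟨R, hR⟩
  apply hQ
  refine ⟨scInv R, ?_⟩
  have h := congrArg scInv hR
  rw [scInv_scF, map_mul] at h
  rw [h]
  congr 1
  have hs : scInv (X ((2 : Fin 3), 0)) = ((Nat.factorial 0 : ℕ) : ℂ)⁻¹ • X ((2 : Fin 3), 0) :=
    aeval_X _ _
  rw [hs]
  norm_num

lemma algL_injective : Function.Injective algL := by
  have h : tvar ≠ 0 := X_ne_zero _
  exact IsLocalization.injective Lring (powers_le_nonZeroDivisors_of_noZeroDivisors h)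

end Stmt7Aux

/-- if `ν` is a nonzero polynomial in the algebraically independent quadratics
`τ^u_k` which, written as a polynomial `Q` in the `τ`'s, is not divisible by (the variable
corresponding to) `τ^h_0`, then `ν` does not lie in the principal ideal of `P` generated by
`τ^h_0 = -2 β^x_0 γ^{x'}_0 + 2 β^y_0 γ^{y'}_0`. -/
theorem stmt7 (Q : MvPolynomial (Fin 3 × ℕ) ℂ) (hQ : Q ≠ 0)
    (hdiv : ¬ (X ((2 : Fin 3), 0) : MvPolynomial (Fin 3 × ℕ) ℂ) ∣ Q) :
    aeval (fun p : Fin 3 × ℕ => tau p.1 p.2) Q ∉ Ideal.span ({tau 2 0} : Set Pring) := by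
  intro hmem
  obtain ⟨c, hc⟩ := Ideal.mem_span_singleton'.mp hmem
  have hz : Th (aeval (fun p : Fin 3 × ℕ => tau p.1 p.2) Q) = 0 := by
    rw [← hc, map_mul, Th_tau202, mul_zero]
  have h1 : Th (aeval (fun p : Fin 3 × ℕ => tau p.1 p.2) Q) = algL (aeval wA Q) := by
    have e1 : Th.comp (aeval (fun p : Fin 3 × ℕ => tau p.1 p.2)) =
        aeval (fun p : Fin 3 × ℕ => Th (tau p.1 p.2)) := comp_aeval _ _
    have e2 : algL.comp (aeval wA) = aeval (fun p : Fin 3 × ℕ => algL (wA p)) := comp_aeval _ _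
    have e3 : (fun p : Fin 3 × ℕ => Th (tau p.1 p.2)) = fun p : Fin 3 × ℕ => algL (wA p) := by
      funext p
      exact Th_tau p.1 p.2
    calc Th (aeval (fun p : Fin 3 × ℕ => tau p.1 p.2) Q)
        = (Th.comp (aeval (fun p : Fin 3 × ℕ => tau p.1 p.2))) Q := rfl
      _ = aeval (fun p : Fin 3 × ℕ => Th (tau p.1 p.2)) Q := by rw [e1]
      _ = aeval (fun p : Fin 3 × ℕ => algL (wA p)) Q := by rw [e3]
      _ = (algL.comp (aeval wA)) Q := by rw [e2]
      _ = algL (aeval wA Q) := rfl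
  have h2 : aeval wA Q = 0 := by
    apply algL_injective
    rw [← h1, hz, map_zero]
  exact aeval_wA_ne_zero hdiv h2
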